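/- arXiv:2409.20108 — 3 statements merged into one kernel-verified Lean document; each statement's English description precedes it below -/
import Mathlib

section
/- Let f : ZMod 4 → Fin 3 be a cyclic word containing the color p exactly twice, the color r exactly once, and the color b exactly once. Then f can be extended, by inserting one new element of color r and one new element of color b at cyclically consecutive positions, to a cyclic word of length 6 satisfying the P3-constraint if and only if the two occurrences of p are cyclically adjacent in f. Consequently, the K3^{-(r,b)}-constraint and the P3^{-(r,b)}-constraint are equivalent. -/
/-!
Both constraints ask red and blue each to alternate with purple, i.e. each of the two arcs between
the purples must contain a red and a blue. If the purples of `f` are not adjacent, each arc holds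
one old letter, and the inserted pair lands in a single arc, so the other arc misses a colour. If
they are adjacent, say `f = p p x y`, inserting the pair between the two purples gives
`p r b p x y` or `p b r p x y`: one order makes red and blue alternate (K3), the other does not (P3).
All of this being finite, both equivalences are checked by evaluation over the `3 ^ 4` words.
-/

namespace SATR

def red : Fin 3 := 0
def blue : Fin 3 := 1
def purple : Fin 3 := 2

/-- `x` lies strictly inside the cyclic arc from `a` to `c` (in the `+1` direction). -/
def arcBetween {n : ℕ} [NeZero n] (a x c : ZMod n) : Prop :=
  0 < (x - a).val ∧ (x - a).val < (c - a).val

/-- Colors `c` and `c'` alternate in the cyclic word `f`: there are two positions of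
color `c` such that each of the two open cyclic arcs they determine contains a
position of color `c'`. -/
def Alternates {n : ℕ} [NeZero n] (f : ZMod n → Fin 3) (c c' : Fin 3) : Prop :=
  ∃ i1 i2 j1 j2 : ZMod n, f i1 = c ∧ f i2 = c ∧ i1 ≠ i2 ∧
    f j1 = c' ∧ f j2 = c' ∧ arcBetween i1 j1 i2 ∧ arcBetween i2 j2 i1

/-- The K3-constraint: all three pairs of distinct colors alternate. -/
def K3Constraint (w : ZMod 6 → Fin 3) : Prop :=
  Alternates w red blue ∧ Alternates w red purple ∧ Alternates w blue purple

/-- The P3-constraint: r–p and b–p alternate, r–b do not. -/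
def P3Constraint (w : ZMod 6 → Fin 3) : Prop :=
  Alternates w red purple ∧ Alternates w blue purple ∧ ¬ Alternates w red blue

/-- Number of occurrences of color `c` in the cyclic word `f`. -/
def count {n : ℕ} [NeZero n] (f : ZMod n → Fin 3) (c : Fin 3) : ℕ :=
  (Finset.univ.filter fun i => f i = c).card

/-- Insert a new element of color `c` into the gap right after position `g`. -/
def insertAt {n : ℕ} [NeZero n] (f : ZMod n → Fin 3) (g : ZMod n) (c : Fin 3) :
    ZMod (n + 1) → Fin 3 :=
  fun j =>
    if j.val = g.val + 1 then c
    else if j.val ≤ g.val then f (j.val : ZMod n)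
    else f ((j.val - 1 : ℕ) : ZMod n)

/-- Insert `c1` right after position `g`, and `c2` immediately (cyclically) after `c1`,
so the two new elements are cyclically consecutive. -/
def insertPair {n : ℕ} [NeZero n] (f : ZMod n → Fin 3) (g : ZMod n) (c1 c2 : Fin 3) :
    ZMod (n + 2) → Fin 3 :=
  insertAt (insertAt f g c1) ((g.val + 1 : ℕ) : ZMod (n + 1)) c2

/-- The cyclic distance between two positions: the minimum of the two arc lengths. -/
def cycDist {n : ℕ} [NeZero n] (i j : ZMod n) : ℕ :=
  min (j - i).val (i - j).val

instance {n : ℕ} [NeZero n] (a x c : ZMod n) : Decidable (arcBetween a x c) := by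
  unfold arcBetween; infer_instance

-- Each existential is placed right after the condition that prunes it, so that `decide` does not
-- run through all quadruples of positions.
instance {n : ℕ} [NeZero n] (f : ZMod n → Fin 3) (c c' : Fin 3) :
    Decidable (Alternates f c c') :=
  decidable_of_iff
    (∃ i1, f i1 = c ∧ ∃ i2, f i2 = c ∧ i1 ≠ i2 ∧
      ∃ j1, f j1 = c' ∧ arcBetween i1 j1 i2 ∧ ∃ j2, f j2 = c' ∧ arcBetween i2 j2 i1) <| by
    constructor
    · rintro ⟨i1, hi1, i2, hi2, hne, j1, hj1, harc1, j2, hj2, harc2⟩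
      exact ⟨i1, i2, j1, j2, hi1, hi2, hne, hj1, hj2, harc1, harc2⟩
    · rintro ⟨i1, i2, j1, j2, hi1, hi2, hne, hj1, hj2, harc1, harc2⟩
      exact ⟨i1, hi1, i2, hi2, hne, j1, hj1, harc1, j2, hj2, harc2⟩

instance (w : ZMod 6 → Fin 3) : Decidable (K3Constraint w) := by
  unfold K3Constraint; infer_instance

instance (w : ZMod 6 → Fin 3) : Decidable (P3Constraint w) := by
  unfold P3Constraint; infer_instance

theorem exists_eq_vec_four (f : ZMod 4 → Fin 3) :
    ∃ a b c d : Fin 3, f = fun i => ![a, b, c, d] ⟨i.val, i.val_lt⟩ :=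
  ⟨f 0, f 1, f 2, f 3, by funext i; fin_cases i <;> rfl⟩

theorem exists_p3_extension_iff_purples_adjacent (f : ZMod 4 → Fin 3)
    (hp : count f purple = 2) (hr : count f red = 1) (hb : count f blue = 1) :
    (∃ g : ZMod 4,
        P3Constraint (insertPair f g red blue) ∨ P3Constraint (insertPair f g blue red)) ↔
      ∃ i : ZMod 4, f i = purple ∧ f (i + 1) = purple := by
  obtain ⟨a, b, c, d, rfl⟩ := exists_eq_vec_four f
  revert a b c d
  decide

theorem exists_k3_extension_iff_purples_adjacent (f : ZMod 4 → Fin 3)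
    (hp : count f purple = 2) (hr : count f red = 1) (hb : count f blue = 1) :
    (∃ g : ZMod 4,
        K3Constraint (insertPair f g red blue) ∨ K3Constraint (insertPair f g blue red)) ↔
      ∃ i : ZMod 4, f i = purple ∧ f (i + 1) = purple := by
  obtain ⟨a, b, c, d, rfl⟩ := exists_eq_vec_four f
  revert a b c d
  decide

/-- The P3^{-(r,b)}-constraint: a length-4 cyclic word with two purples, one red and
one blue can be extended to a P3-satisfying length-6 word by inserting one red and
one blue at cyclically consecutive positions iff the two purples are cyclically
adjacent; consequently the K3^{-(r,b)}- and P3^{-(r,b)}-constraints are equivalent. -/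
theorem p3_minus_rb_iff_purples_adjacent
    (f : ZMod 4 → Fin 3)
    (hp : count f purple = 2) (hr : count f red = 1) (hb : count f blue = 1) :
    ((∃ g : ZMod 4,
        P3Constraint (insertPair f g red blue) ∨ P3Constraint (insertPair f g blue red)) ↔
      (∃ i : ZMod 4, f i = purple ∧ f (i + 1) = purple)) ∧
    ((∃ g : ZMod 4,
        P3Constraint (insertPair f g red blue) ∨ P3Constraint (insertPair f g blue red)) ↔
      (∃ g : ZMod 4,
        K3Constraint (insertPair f g red blue) ∨ K3Constraint (insertPair f g blue red))) := by
  have hP3 := exists_p3_extension_iff_purples_adjacent f hp hr hb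
  exact ⟨hP3, hP3.trans (exists_k3_extension_iff_purples_adjacent f hp hr hb).symm⟩

end SATR
end

section
/- Let f : ZMod 4 → Fin 3 be a cyclic word containing the color b exactly twice, the color r exactly once, and the color p exactly once. Then f can be extended, by inserting one new element of color r and one new element of color p at cyclically consecutive positions, to a cyclic word of length 6 satisfying the P3-constraint if and only if the two occurrences of b in f are not cyclically adjacent (equivalently, the two b's are at cyclic distance 2, alternating with the other two elements). -/
namespace SATR

instance inst_s9 {n : ℕ} [NeZero n] (f : ZMod n → Fin 3) (c c' : Fin 3) :
    Decidable (Alternates f c c') := by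
  unfold Alternates; infer_instance

theorem arcBetween_sub_right {n : ℕ} [NeZero n] {a x c : ZMod n} (h : arcBetween a x c)
    (k : ZMod n) : arcBetween (a - k) (x - k) (c - k) := by
  simpa only [arcBetween, sub_sub_sub_cancel_right] using h

theorem Alternates.comp_add {n : ℕ} [NeZero n] {w : ZMod n → Fin 3} {c c' : Fin 3}
    (h : Alternates w c c') (k : ZMod n) : Alternates (fun i => w (i + k)) c c' := by
  obtain ⟨i1, i2, j1, j2, hi1, hi2, hne, hj1, hj2, h1, h2⟩ := h
  refine ⟨i1 - k, i2 - k, j1 - k, j2 - k, by simpa, by simpa, sub_left_injective.ne hne,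
    by simpa, by simpa, arcBetween_sub_right h1 k, arcBetween_sub_right h2 k⟩

theorem alternates_comp_add_iff {n : ℕ} [NeZero n] (w : ZMod n → Fin 3) (c c' : Fin 3)
    (k : ZMod n) : Alternates (fun i => w (i + k)) c c' ↔ Alternates w c c' := by
  refine ⟨fun h => ?_, fun h => h.comp_add k⟩
  simpa using h.comp_add (-k)

theorem p3Constraint_comp_add_iff (w : ZMod 6 → Fin 3) (k : ZMod 6) :
    P3Constraint (fun i => w (i + k)) ↔ P3Constraint w := by
  simp only [P3Constraint, alternates_comp_add_iff]

-- The letter `f k` sits at position `k` of the extended word, or at `k + 2` when the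
-- inserted pair comes before it.
theorem insertPair_comp_add (f : ZMod 4 → Fin 3) (g k : ZMod 4) (c1 c2 : Fin 3) :
    ∃ k' : ZMod 6,
      insertPair (fun i => f (i + k)) g c1 c2 = fun j => insertPair f (g + k) c1 c2 (j + k') := by
  refine ⟨if g.val + k.val < 4 then k.val else k.val + 2, funext fun j => ?_⟩
  fin_cases g <;> fin_cases k <;> fin_cases j <;> rfl

def P3Extendable (f : ZMod 4 → Fin 3) : Prop :=
  ∃ g : ZMod 4, P3Constraint (insertPair f g red purple) ∨
    P3Constraint (insertPair f g purple red)

instance (f : ZMod 4 → Fin 3) : Decidable (P3Extendable f) := by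
  unfold P3Extendable; infer_instance

theorem p3Extendable_comp_add_iff (f : ZMod 4 → Fin 3) (k : ZMod 4) :
    P3Extendable (fun i => f (i + k)) ↔ P3Extendable f := by
  have shift (g : ZMod 4) (c1 c2 : Fin 3) :
      P3Constraint (insertPair (fun i => f (i + k)) g c1 c2) ↔
        P3Constraint (insertPair f (g + k) c1 c2) := by
    obtain ⟨k', hk'⟩ := insertPair_comp_add f g k c1 c2
    rw [hk', p3Constraint_comp_add_iff]
  simp only [P3Extendable, shift]
  exact ⟨fun ⟨g, h⟩ => ⟨g + k, h⟩, fun ⟨g, h⟩ => ⟨g - k, by rwa [sub_add_cancel]⟩⟩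

def HasAdjacent {n : ℕ} {α : Type*} (f : ZMod n → α) (c : α) : Prop :=
  ∃ i, f i = c ∧ f (i + 1) = c

instance {n : ℕ} [NeZero n] {α : Type*} [DecidableEq α] (f : ZMod n → α) (c : α) :
    Decidable (HasAdjacent f c) := by
  unfold HasAdjacent; infer_instance

theorem hasAdjacent_comp_add_iff {n : ℕ} {α : Type*} (f : ZMod n → α) (c : α) (k : ZMod n) :
    HasAdjacent (fun i => f (i + k)) c ↔ HasAdjacent f c := by
  simp only [HasAdjacent, add_right_comm _ (1 : ZMod n)]
  exact ⟨fun ⟨i, h⟩ => ⟨i + k, h⟩, fun ⟨i, h⟩ => ⟨i - k, by rwa [sub_add_cancel]⟩⟩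

def word4 (a b c d : Fin 3) : ZMod 4 → Fin 3 := ![a, b, c, d]

theorem exists_rotation_eq_normalForm (f : ZMod 4 → Fin 3)
    (hb : count f blue = 2) (hr : count f red = 1) (hp : count f purple = 1) :
    ∃ k : ZMod 4, (fun i => f (i + k)) = word4 blue blue red purple ∨
      (fun i => f (i + k)) = word4 blue blue purple red ∨
      (fun i => f (i + k)) = word4 blue red blue purple ∨
      (fun i => f (i + k)) = word4 blue purple blue red := by
  revert f
  decide +kernel

/-- The P3^{-(r,p)}-constraint: a length-4 cyclic word with two blues, one red and
one purple can be extended to a P3-satisfying length-6 word by inserting one red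
and one purple at cyclically consecutive positions iff the two blues are not
cyclically adjacent. -/
theorem p3_minus_rp_iff_blues_not_adjacent
    (f : ZMod 4 → Fin 3)
    (hb : count f blue = 2) (hr : count f red = 1) (hp : count f purple = 1) :
    (∃ g : ZMod 4,
        P3Constraint (insertPair f g red purple) ∨
          P3Constraint (insertPair f g purple red)) ↔
      ¬ (∃ i : ZMod 4, f i = blue ∧ f (i + 1) = blue) := by
  obtain ⟨k, hk⟩ := exists_rotation_eq_normalForm f hb hr hp
  change P3Extendable f ↔ ¬ HasAdjacent f blue
  rw [← p3Extendable_comp_add_iff f k, ← hasAdjacent_comp_add_iff f blue k]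
  rcases hk with hk | hk | hk | hk <;> rw [hk] <;> decide +kernel

end SATR
end

section
/- Let f : ZMod 6 → Fin 3 have each color occurring exactly twice, and suppose the positions can be partitioned into three cyclically contiguous blocks of two positions each, one block containing both occurrences of r and each of the other two blocks containing one occurrence of b and one occurrence of p. Then f does not satisfy the P3-constraint. -/
namespace SATR

theorem not_arcBetween_self_add_one {n : ℕ} [NeZero n] (i x : ZMod n) :
    ¬ arcBetween i x (i + 1) := by
  rintro ⟨hpos, hlt⟩
  have hone : (i + 1 - i).val ≤ 1 := by
    rw [add_sub_cancel_left, ← Nat.cast_one, ZMod.val_natCast]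
    exact Nat.mod_le 1 n
  omega

/-- Two cyclically adjacent occurrences leave one of the two open arcs between them empty. -/
theorem not_alternates_of_forall_eq_or_eq_add_one {n : ℕ} [NeZero n] {f : ZMod n → Fin 3}
    {c : Fin 3} (c' : Fin 3) {i : ZMod n} (hc : ∀ x, f x = c → x = i ∨ x = i + 1) :
    ¬ Alternates f c c' := by
  rintro ⟨i1, i2, j1, j2, h1, h2, hne, -, -, harc1, harc2⟩
  rcases hc i1 h1 with rfl | rfl <;> rcases hc i2 h2 with rfl | rfl
  · exact hne rfl
  · exact not_arcBetween_self_add_one _ _ harc1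
  · exact not_arcBetween_self_add_one _ _ harc2
  · exact hne rfl

theorem eq_or_eq_of_count_eq_two {n : ℕ} [NeZero n] {f : ZMod n → Fin 3} {c : Fin 3}
    (hcount : count f c = 2) {a b : ZMod n} (ha : f a = c) (hb : f b = c) (hab : a ≠ b)
    {x : ZMod n} (hx : f x = c) : x = a ∨ x = b := by
  have hpair : ({a, b} : Finset (ZMod n)) = Finset.univ.filter fun j => f j = c := by
    apply Finset.eq_of_subset_of_card_le
    · intro y hy
      rcases Finset.mem_insert.mp hy with rfl | hy
      · simpa using ha
      · simpa [Finset.mem_singleton.mp hy] using hb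
    · rw [← count, hcount, Finset.card_pair hab]
  have hmem : x ∈ ({a, b} : Finset (ZMod n)) := by simp [hpair, hx]
  simpa using hmem

theorem p3_fails_for_222_split_with_red_block_general
    (f : ZMod 6 → Fin 3) (h : ∀ c : Fin 3, count f c = 2) (i : ZMod 6)
    (hr1 : f i = red) (hr2 : f (i + 1) = red) :
    ¬ P3Constraint f := by
  have hadj : i ≠ i + 1 := by simpa using (by decide : (1 : ZMod 6) ≠ 0)
  have hreds : ∀ x, f x = red → x = i ∨ x = i + 1 :=
    fun _ => eq_or_eq_of_count_eq_two (h red) hr1 hr2 hadj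
  exact fun hP3 => not_alternates_of_forall_eq_or_eq_add_one purple hreds hP3.1

/-- If a length-6 cyclic word with each color occurring exactly twice splits into
three cyclically contiguous blocks of two positions, one block holding both reds
and each of the other two blocks holding one blue and one purple, then the
P3-constraint fails. -/
theorem p3_fails_for_222_split_with_red_block
    (f : ZMod 6 → Fin 3) (h : ∀ c : Fin 3, count f c = 2) (i : ZMod 6)
    (hr1 : f i = red) (hr2 : f (i + 1) = red)
    (hblock1 : (f (i + 2) = blue ∧ f (i + 3) = purple) ∨
               (f (i + 2) = purple ∧ f (i + 3) = blue))
    (hblock2 : (f (i + 4) = blue ∧ f (i + 5) = purple) ∨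
               (f (i + 4) = purple ∧ f (i + 5) = blue)) :
    ¬ P3Constraint f :=
  p3_fails_for_222_split_with_red_block_general f h i hr1 hr2

end SATR
end
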